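/- There exists a finite rotation-puzzle instance 𝒜 over the two-color tile set T_2 (the two-color NOT subpuzzle, simulating a NOT gate) with a designated input boundary edge at its bottom and a designated output boundary edge at its top, such that for each color c ∈ {blue, red} the instance 𝒜 has exactly one solution whose color at the input edge is c, and this solution has the other element of {blue, red} as its color at the output edge. -/

import Mathlib

/-- The two Tantrix colors used in the two-color tile set. -/
inductive Color where
  | red
  | blue
deriving DecidableEq

/-- A tile is its clockwise color sequence: a word of length 6 over the colors,
edges indexed `0, …, 5` clockwise. -/
abbrev Tile := Fin 6 → Color

/-- Cyclic rotation of a tile by `k` steps: edge `i` of the rotated tile carries the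
color of edge `i + k` of the original sequence.  Two solutions are compared as the
assigned rotated color sequences, so orientations of a tile with identical color
sequences are identified. -/
def rotTile (k : Fin 6) (t : Tile) : Tile := fun i => t (i + k)

open Color in
/-- The two-color tile set `T₂`, consisting of the 8 color sequences
bbrrrr, rrbbbb, brrbrr, rbbrbb, rbrrrb, brbbbr, bbbbbb, rrrrrr. -/
def T2 : Set Tile :=
  { ![blue,blue,red,red,red,red],
    ![red,red,blue,blue,blue,blue],
    ![blue,red,red,blue,red,red],
    ![red,blue,blue,red,blue,blue],
    ![red,blue,red,red,red,blue],
    ![blue,red,blue,blue,blue,red],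
    ![blue,blue,blue,blue,blue,blue],
    ![red,red,red,red,red,red] }

/-- The six neighbor offsets of the hexagonal layout of `ℤ²`, listed clockwise
starting from straight up; edge `i` of a tile at `x` is the edge shared with the
neighboring point `x + dirs i`, and opposite directions differ by `3` (mod 6).
Two points are neighbors exactly if their difference is one of these offsets. -/
def dirs : Fin 6 → ℤ × ℤ := ![(0,1), (1,1), (1,0), (0,-1), (-1,-1), (-1,0)]

/-- A finite rotation-puzzle instance over the tile set `T2`:
a function from a finite set of points of `ℤ²` to `T2`. -/
structure Puzzle where
  tiles : ℤ × ℤ → Option Tile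
  finite : {x | tiles x ≠ none}.Finite
  memT2 : ∀ x t, tiles x = some t → t ∈ T2

/-- `sol` is a solution of the instance `P`: it assigns to each occupied point a
cyclic rotation of the tile placed there, such that for every pair of neighboring
occupied points the two assigned sequences give the same color to their joint edge
(edge `d` of the tile at `x` is glued to edge `d + 3` of the tile at `x + dirs d`). -/
def IsSolution (P : Puzzle) (sol : ℤ × ℤ → Option Tile) : Prop :=
  (∀ x, (P.tiles x = none → sol x = none) ∧
    (∀ t, P.tiles x = some t → ∃ k : Fin 6, sol x = some (rotTile k t))) ∧
  (∀ (x : ℤ × ℤ) (d : Fin 6) (s s' : Tile),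
    sol x = some s → sol (x + dirs d) = some s' → s d = s' (d + 3))

/-- `(x, d)` is a boundary edge of `P`: the point `x` is occupied and its
neighbor in direction `d` is not. -/
def IsBoundary (P : Puzzle) (x : ℤ × ℤ) (d : Fin 6) : Prop :=
  P.tiles x ≠ none ∧ P.tiles (x + dirs d) = none

/-- The solution `sol` has color `c` at the edge in direction `d` of the tile at `x`. -/
def SolColor (sol : ℤ × ℤ → Option Tile) (x : ℤ × ℤ) (d : Fin 6) (c : Color) : Prop :=
  ∃ s, sol x = some s ∧ s d = c

/-!
The gate is a rhombus of four tiles: bbrrrr at the input point `(0,0)`, rbbrbb at `(0,1)` and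
`(1,0)`, brrbrr at `(1,1)`. A solution is a choice of one rotation per tile subject to the five
joint-edge equations of the rhombus, and among the `6 ^ 4` choices exactly one solution exists for
each input color; in it the top edge of `(0,1)` carries the opposite color.
-/

open Color Function

section Placement

variable {n : ℕ} (cell : Fin n → ℤ × ℤ)

noncomputable def placeAt (s : Fin n → Tile) (x : ℤ × ℤ) : Option Tile :=
  if h : ∃ i, cell i = x then some (s h.choose) else none

variable {cell}

theorem placeAt_apply_cell (hcell : Injective cell) (s : Fin n → Tile) (i : Fin n) :
    placeAt cell s (cell i) = some (s i) := by
  have h : ∃ j, cell j = cell i := ⟨i, rfl⟩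
  rw [placeAt, dif_pos h, hcell h.choose_spec]

theorem placeAt_eq_none {s : Fin n → Tile} {x : ℤ × ℤ} (hx : ∀ i, cell i ≠ x) :
    placeAt cell s x = none :=
  dif_neg (not_exists.2 hx)

theorem exists_of_placeAt_eq_some {s : Fin n → Tile} {x : ℤ × ℤ} {t : Tile}
    (h : placeAt cell s x = some t) : ∃ i, cell i = x ∧ s i = t := by
  unfold placeAt at h
  split_ifs at h with hx
  exact ⟨hx.choose, hx.choose_spec, Option.some_inj.1 h⟩

variable (cell)

noncomputable def Puzzle.ofCells (tile : Fin n → Tile) (htile : ∀ i, tile i ∈ T2) : Puzzle where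
  tiles := placeAt cell tile
  finite := (Set.finite_range cell).subset fun x hx => by
    by_contra hx'
    exact hx (placeAt_eq_none fun i hi => hx' ⟨i, hi⟩)
  memT2 x t h := by
    obtain ⟨i, -, rfl⟩ := exists_of_placeAt_eq_some h
    exact htile i

@[simp]
theorem Puzzle.ofCells_tiles (tile : Fin n → Tile) (htile : ∀ i, tile i ∈ T2) :
    (Puzzle.ofCells cell tile htile).tiles = placeAt cell tile :=
  rfl

def Matches (s : Fin n → Tile) : Prop :=
  ∀ i j d, cell i + dirs d = cell j → s i d = s j (d + 3)

instance (s : Fin n → Tile) : Decidable (Matches cell s) := by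
  unfold Matches; infer_instance

def rotateEach (r : Fin n → Fin 6) (tile : Fin n → Tile) : Fin n → Tile :=
  fun i => rotTile (r i) (tile i)

variable {cell} {tile : Fin n → Tile} {htile : ∀ i, tile i ∈ T2}

theorem isSolution_placeAt_rotateEach (hcell : Injective cell) {r : Fin n → Fin 6}
    (hr : Matches cell (rotateEach r tile)) :
    IsSolution (Puzzle.ofCells cell tile htile) (placeAt cell (rotateEach r tile)) := by
  refine ⟨fun x => ?_, fun x d s s' hs hs' => ?_⟩
  · by_cases hx : ∃ i, cell i = x
    · obtain ⟨i, rfl⟩ := hx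
      refine ⟨fun h => ?_, fun t ht => ⟨r i, ?_⟩⟩
      · simp [placeAt_apply_cell hcell] at h
      · rw [Puzzle.ofCells_tiles, placeAt_apply_cell hcell, Option.some_inj] at ht
        rw [placeAt_apply_cell hcell, ← ht, rotateEach]
    · have hx' := not_exists.1 hx
      refine ⟨fun _ => placeAt_eq_none hx', fun t ht => ?_⟩
      simp [placeAt_eq_none hx'] at ht
  · obtain ⟨i, rfl, rfl⟩ := exists_of_placeAt_eq_some hs
    obtain ⟨j, hj, rfl⟩ := exists_of_placeAt_eq_some hs'
    exact hr i j d hj.symm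

theorem IsSolution.exists_eq_placeAt_rotateEach (hcell : Injective cell)
    {sol : ℤ × ℤ → Option Tile} (h : IsSolution (Puzzle.ofCells cell tile htile) sol) :
    ∃ r : Fin n → Fin 6,
      sol = placeAt cell (rotateEach r tile) ∧ Matches cell (rotateEach r tile) := by
  choose r hr using fun i => (h.1 (cell i)).2 (tile i) (placeAt_apply_cell hcell tile i)
  have hsol : sol = placeAt cell (rotateEach r tile) := by
    funext x
    by_cases hx : ∃ i, cell i = x
    · obtain ⟨i, rfl⟩ := hx
      rw [hr, placeAt_apply_cell hcell, rotateEach]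
    · have hx' := not_exists.1 hx
      rw [(h.1 x).1 (placeAt_eq_none hx'), placeAt_eq_none hx']
  refine ⟨r, hsol, fun i j d hij => h.2 (cell i) d _ _ ?_ ?_⟩
  · rw [hsol, placeAt_apply_cell hcell]
  · rw [hsol, hij, placeAt_apply_cell hcell]

theorem Puzzle.ofCells_isBoundary (hcell : Injective cell) {i : Fin n} {d : Fin 6}
    (hd : ∀ j, cell j ≠ cell i + dirs d) : IsBoundary (Puzzle.ofCells cell tile htile) (cell i) d :=
  ⟨by simp [placeAt_apply_cell hcell], placeAt_eq_none hd⟩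

theorem solColor_placeAt_cell_iff (hcell : Injective cell) {s : Fin n → Tile} {i : Fin n}
    {d : Fin 6} {c : Color} : SolColor (placeAt cell s) (cell i) d c ↔ s i d = c := by
  simp [SolColor, placeAt_apply_cell hcell]

end Placement

def notCell : Fin 4 → ℤ × ℤ := ![(0, 0), (0, 1), (1, 0), (1, 1)]

def notTile : Fin 4 → Tile :=
  ![![blue, blue, red, red, red, red], ![red, blue, blue, red, blue, blue],
    ![red, blue, blue, red, blue, blue], ![blue, red, red, blue, red, red]]

theorem notCell_injective : Injective notCell := by decide

theorem notTile_mem_T2 (i : Fin 4) : notTile i ∈ T2 := by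
  fin_cases i <;> simp [notTile, T2]

noncomputable def notPuzzle : Puzzle := Puzzle.ofCells notCell notTile notTile_mem_T2

def notRot : Color → Fin 4 → Fin 6
  | blue => ![4, 0, 0, 1]
  | red => ![1, 1, 1, 0]

theorem matches_notRot (c : Color) : Matches notCell (rotateEach (notRot c) notTile) := by
  cases c <;> decide

theorem rotateEach_eq_notRot (r : Fin 4 → Fin 6) (hr : Matches notCell (rotateEach r notTile)) :
    rotateEach r notTile = rotateEach (notRot (rotateEach r notTile 0 3)) notTile := by
  -- an exhaustive check of all `6 ^ 4` rotation vectors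
  revert r; decide +kernel

/-- the two-color NOT subpuzzle: input boundary edge at the bottom, output boundary edge at the top; for each color `c ∈ {blue, red}` there is exactly one solution with color `c` at the input edge, and it has the other element of `{blue, red}` at the output edge. -/
theorem two_color_NOT_subpuzzle :
    ∃ (P : Puzzle) (xIn xOut : ℤ × ℤ),
      IsBoundary P xIn 3 ∧ IsBoundary P xOut 0 ∧ xIn.2 < xOut.2 ∧
      ∀ c ∈ ({Color.blue, Color.red} : Set Color),
        ∃ sol : ℤ × ℤ → Option Tile,
          (IsSolution P sol ∧ SolColor sol xIn 3 c ∧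
            SolColor sol xOut 0 (if c = Color.blue then Color.red else Color.blue)) ∧
          (∀ sol' : ℤ × ℤ → Option Tile,
            IsSolution P sol' → SolColor sol' xIn 3 c → sol' = sol) := by
  refine ⟨notPuzzle, notCell 0, notCell 1, Puzzle.ofCells_isBoundary notCell_injective (by decide),
    Puzzle.ofCells_isBoundary notCell_injective (by decide), by decide, fun c _ => ?_⟩
  refine ⟨placeAt notCell (rotateEach (notRot c) notTile),
    ⟨isSolution_placeAt_rotateEach notCell_injective (matches_notRot c), ?_, ?_⟩,
    fun sol hsol hin => ?_⟩
  · rw [solColor_placeAt_cell_iff notCell_injective]; cases c <;> rfl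
  · rw [solColor_placeAt_cell_iff notCell_injective]; cases c <;> rfl
  · obtain ⟨r, rfl, hr⟩ := hsol.exists_eq_placeAt_rotateEach notCell_injective
    rw [solColor_placeAt_cell_iff notCell_injective] at hin
    rw [rotateEach_eq_notRot r hr, hin]
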